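/- arXiv:2401.15405 — 5 statements merged into one kernel-verified Lean document; each statement's English description precedes it below -/
import Mathlib

section
/- Let x̄ ∈ ℝ^n, ε > 0, and let B be the closed ball of radius ε centered at x̄. Let f : ℝ^n → ℝ be Lipschitz on B with constant L_f and satisfy |f(x)| ≤ M for all x ∈ B. Let g : ℝ^n → ℝ be differentiable on a neighborhood of B with g(x) ≥ m₁ > 0 for all x ∈ B, g Lipschitz on B with constant L_g, and the gradient ∇g Lipschitz on B with constant L_{∇g}. Suppose ρ₁ ≥ 0 and v : ℝ^n → ℝ^n satisfy f(y) ≥ f(x) + ⟨v(x), y − x⟩ − (ρ₁/2)‖y − x‖₂² for all x, y ∈ B. Then there exists ρ > 0 such that for all x, y ∈ B: f(y)/g(y) ≥ f(x)/g(x) + ⟨(v(x)·g(x) − f(x)·∇g(x))/g(x)², y − x⟩ − (ρ/2)‖y − x‖₂². -/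
/-!
Write `f / g = f * g⁻¹`. Because `∇g` is Lipschitz, `g` and hence `g⁻¹` deviate from their
linearisations by `O(‖y - x‖²)` in both directions. Multiplying a function obeying a one-sided
quadratic (proximal subgradient) inequality by such a positive function preserves the inequality,
with the product-rule subgradient `g⁻¹ v + f ∇(g⁻¹)`. The subgradients `v x` are not bounded, so the
cross term `⟪v x, y - x⟫ (g⁻¹ y - g⁻¹ x)` needs a case split: either `⟪v x, y - x⟫ = O(‖y - x‖)` and
the cross term is quadratic, or `⟪v x, y - x⟫` is so negative that the Lipschitz bound on `f`
already gives the inequality.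
-/

open Metric Set Bornology InnerProductSpace
open scoped NNReal RealInnerProductSpace

theorem LipschitzOnWith.isBounded_image {α β : Type*} [PseudoMetricSpace α]
    [PseudoMetricSpace β] {K : ℝ≥0} {f : α → β} {s : Set α} (hf : LipschitzOnWith K f s)
    (hs : IsBounded s) : IsBounded (f '' s) := by
  obtain ⟨C, hC⟩ := isBounded_iff.1 hs
  refine isBounded_iff.2 ⟨K * C, ?_⟩
  rintro _ ⟨x, hx, rfl⟩ _ ⟨y, hy, rfl⟩
  exact (hf.dist_le_mul x hx y hy).trans (by gcongr; exact hC hx hy)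

theorem LipschitzOnWith.inv_of_le {α : Type*} [PseudoMetricSpace α] {K : ℝ≥0} {g : α → ℝ}
    {s : Set α} {m : ℝ} (hg : LipschitzOnWith K g s) (hm : 0 < m) (hgm : ∀ x ∈ s, m ≤ g x) :
    LipschitzOnWith (Real.toNNReal (K / m ^ 2)) (fun x => (g x)⁻¹) s := by
  refine LipschitzOnWith.of_dist_le' fun x hx y hy => ?_
  have hgx := hm.trans_le (hgm x hx)
  have hgy := hm.trans_le (hgm y hy)
  have hm2 : m ^ 2 ≤ g x * g y := by nlinarith [hgm x hx, hgm y hy]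
  rw [Real.dist_eq, inv_sub_inv hgx.ne' hgy.ne', abs_div, abs_of_pos (mul_pos hgx hgy),
    div_mul_eq_mul_div, ← Real.dist_eq, dist_comm]
  exact div_le_div₀ (by positivity) (hg.dist_le_mul x hx y hy) (by positivity) hm2

variable {E : Type*} [NormedAddCommGroup E] [InnerProductSpace ℝ E]

def HasLowerQuadraticModelOn (f : E → ℝ) (v : E → E) (ρ : ℝ) (S : Set E) : Prop :=
  ∀ x ∈ S, ∀ y ∈ S, f x + ⟪v x, y - x⟫ - ρ / 2 * ‖y - x‖ ^ 2 ≤ f y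

def HasQuadraticModelOn (g : E → ℝ) (G : E → E) (C : ℝ) (S : Set E) : Prop :=
  ∀ x ∈ S, ∀ y ∈ S, |g y - g x - ⟪G x, y - x⟫| ≤ C * ‖y - x‖ ^ 2

theorem HasLowerQuadraticModelOn.mono {f : E → ℝ} {v : E → E} {ρ ρ' : ℝ} {S : Set E}
    (hf : HasLowerQuadraticModelOn f v ρ S) (hρ : ρ ≤ ρ') : HasLowerQuadraticModelOn f v ρ' S :=
  fun x hx y hy => (hf x hx y hy).trans' (by gcongr)

theorem HasQuadraticModelOn.of_lipschitzOnWith [CompleteSpace E] {g : E → ℝ} {G : E → E}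
    {K : ℝ≥0} {s : Set E} (hs : Convex ℝ s) (hg : ∀ x ∈ s, HasGradientWithinAt g (G x) s x)
    (hG : LipschitzOnWith K G s) : HasQuadraticModelOn g G K s := by
  intro x hx y hy
  have hmvt :=
    (hs.inter (convex_closedBall x ‖y - x‖)).norm_image_sub_le_of_norm_hasFDerivWithin_le'
    (f' := fun z => toDual ℝ E (G z)) (φ := toDual ℝ E (G x)) (C := K * ‖y - x‖)
    (fun z hz => (hg z hz.1).hasFDerivWithinAt.mono inter_subset_left)
    (fun z hz => by
      rw [← map_sub, LinearIsometryEquiv.norm_map, ← dist_eq_norm]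
      exact (hG.dist_le_mul z hz.1 x hx).trans (by gcongr; exact hz.2))
    ⟨hx, mem_closedBall_self (norm_nonneg _)⟩ ⟨hy, by simp [mem_closedBall, dist_eq_norm]⟩
  simpa only [toDual_apply_apply, Real.norm_eq_abs, sq, mul_assoc] using hmvt

theorem HasQuadraticModelOn.inv {g : E → ℝ} {G : E → E} {C m MG : ℝ} {K : ℝ≥0} {s : Set E}
    (hg : HasQuadraticModelOn g G C s) (hm : 0 < m) (hgm : ∀ x ∈ s, m ≤ g x)
    (hg_lip : LipschitzOnWith K g s) (hG : ∀ x ∈ s, ‖G x‖ ≤ MG) :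
    HasQuadraticModelOn (fun x => (g x)⁻¹) (fun x => -((g x ^ 2)⁻¹ • G x))
      (C / m ^ 2 + K * MG / m ^ 3) s := by
  intro x hx y hy
  have ha := hgm x hx
  have hb := hgm y hy
  have ha0 := hm.trans_le ha
  have hb0 := hm.trans_le hb
  set t := ⟪G x, y - x⟫
  set r := ‖y - x‖
  have hlin : |g y - g x - t| ≤ C * r ^ 2 := hg x hx y hy
  have hba : |g y - g x| ≤ K * r := by
    simpa only [dist_eq_norm, Real.norm_eq_abs] using hg_lip.dist_le_mul y hy x hx
  have ht : |t| ≤ MG * r :=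
    (abs_real_inner_le_norm _ _).trans (by gcongr; exact hG x hx)
  have hsplit : (g y)⁻¹ - (g x)⁻¹ - ⟪-((g x ^ 2)⁻¹ • G x), y - x⟫
      = -(g y - g x - t) / (g x * g y) + (g y - g x) * t / (g x ^ 2 * g y) := by
    rw [inner_neg_left, real_inner_smul_left]
    field_simp
    ring
  have h1 : |g y - g x - t| / (g x * g y) ≤ C * r ^ 2 / m ^ 2 :=
    div_le_div₀ ((abs_nonneg _).trans hlin) hlin (by positivity) (by nlinarith)
  have h2 : |g y - g x| * |t| / (g x ^ 2 * g y) ≤ K * r * (MG * r) / m ^ 3 := by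
    refine div_le_div₀ ?_ (mul_le_mul hba ht (abs_nonneg _) ?_) (by positivity) ?_
    · exact mul_nonneg ((abs_nonneg _).trans hba) ((abs_nonneg _).trans ht)
    · exact (abs_nonneg _).trans hba
    · have : m ^ 2 ≤ g x ^ 2 := by gcongr
      calc m ^ 3 = m ^ 2 * m := by ring
        _ ≤ g x ^ 2 * g y := by gcongr
  calc |(g y)⁻¹ - (g x)⁻¹ - ⟪-((g x ^ 2)⁻¹ • G x), y - x⟫|
      ≤ |g y - g x - t| / (g x * g y) + |g y - g x| * |t| / (g x ^ 2 * g y) := by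
        rw [hsplit]
        refine (abs_add_le _ _).trans_eq ?_
        simp only [abs_div, abs_neg, abs_mul, abs_pow, abs_of_pos ha0, abs_of_pos hb0]
    _ ≤ C * r ^ 2 / m ^ 2 + K * r * (MG * r) / m ^ 3 := add_le_add h1 h2
    _ = (C / m ^ 2 + K * MG / m ^ 3) * r ^ 2 := by ring

theorem neg_mul_sq_le_sub_mul_sub_mul {p q α β s r Kf Kh c H R ρ : ℝ} (hc : 0 < c)
    (hα : c ≤ α) (hβ : c ≤ β) (hβH : β ≤ H) (hKf : 0 ≤ Kf) (hKh : 0 ≤ Kh) (hρ : 0 ≤ ρ)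
    (hr : 0 ≤ r) (hrR : r ≤ R) (hqp : |q - p| ≤ Kf * r) (hβα : |β - α| ≤ Kh * r)
    (hsub : p + s - ρ / 2 * r ^ 2 ≤ q) :
    -(((Kf * H / c + Kf + ρ * R / 2) * Kh + ρ * H / 2) * r ^ 2) ≤ (q - p) * β - α * s := by
  have hH : 0 ≤ H := hc.le.trans (hβ.trans hβH)
  have hR : 0 ≤ R := hr.trans hrR
  have hqp' := abs_le.1 hqp
  set K := Kf * H / c + Kf + ρ * R / 2
  rcases le_or_gt s (-(Kf * H / c * r)) with hs | hs
  · have hαs : α * s ≤ -(Kf * H * r) := calc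
      α * s ≤ c * s := mul_le_mul_of_nonpos_right hα (hs.trans (neg_nonpos.2 (by positivity)))
      _ ≤ c * -(Kf * H / c * r) := by gcongr
      _ = -(Kf * H * r) := by field_simp
    have hqpβ : -(Kf * H * r) ≤ (q - p) * β := by nlinarith
    have : 0 ≤ (K * Kh + ρ * H / 2) * r ^ 2 := by positivity
    linarith
  · have hs' : |s| ≤ K * r := by
      have : ρ / 2 * r ^ 2 ≤ ρ * R / 2 * r := by
        nlinarith [mul_le_mul_of_nonneg_left hrR (mul_nonneg hρ hr)]
      have : 0 ≤ Kf * H / c * r := by positivity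
      have : 0 ≤ ρ * R / 2 * r := by positivity
      have : K * r = Kf * H / c * r + Kf * r + ρ * R / 2 * r := by ring
      refine abs_le.2 ⟨?_, ?_⟩ <;> linarith
    have hsβα : -(K * r * (Kh * r)) ≤ s * (β - α) := by
      refine neg_le_of_abs_le ?_
      rw [abs_mul]
      exact mul_le_mul hs' hβα (abs_nonneg _) ((abs_nonneg _).trans hs')
    have hρβ : ρ / 2 * r ^ 2 * β ≤ ρ / 2 * r ^ 2 * H := by gcongr
    have hsubβ : (s - ρ / 2 * r ^ 2) * β ≤ (q - p) * β :=
      mul_le_mul_of_nonneg_right (by linarith) (hc.le.trans hβ)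
    linarith

theorem HasLowerQuadraticModelOn.mul {f h : E → ℝ} {v w : E → E} {ρ C c : ℝ} {Kf Kh : ℝ≥0}
    {S : Set E} (hS : IsBounded S) (hf : HasLowerQuadraticModelOn f v ρ S) (hρ : 0 ≤ ρ)
    (hf_lip : LipschitzOnWith Kf f S) (hh : HasQuadraticModelOn h w C S)
    (hh_lip : LipschitzOnWith Kh h S) (hc : 0 < c) (hhc : ∀ x ∈ S, c ≤ h x) :
    ∃ ρ', HasLowerQuadraticModelOn (fun x => f x * h x) (fun x => h x • v x + f x • w x)
      ρ' S := by
  obtain ⟨M, hM⟩ := (hf_lip.isBounded_image hS).exists_norm_le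
  obtain ⟨H, hH⟩ := (hh_lip.isBounded_image hS).exists_norm_le
  obtain ⟨R, hR⟩ := isBounded_iff.1 hS
  rw [forall_mem_image] at hM hH
  refine ⟨2 * ((Kf * H / c + Kf + ρ * R / 2) * Kh + ρ * H / 2 + M * C), fun x hx y hy => ?_⟩
  have hcross := neg_mul_sq_le_sub_mul_sub_mul hc (hhc x hx) (hhc y hy)
    ((le_abs_self _).trans (hH hy)) Kf.coe_nonneg Kh.coe_nonneg hρ (norm_nonneg (y - x))
    ((dist_eq_norm y x).symm.trans_le (hR hy hx))
    (by rw [← Real.dist_eq, ← dist_eq_norm]; exact hf_lip.dist_le_mul y hy x hx)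
    (by rw [← Real.dist_eq, ← dist_eq_norm]; exact hh_lip.dist_le_mul y hy x hx)
    (hf x hx y hy)
  have hmodel : -(M * (C * ‖y - x‖ ^ 2)) ≤ f x * (h y - h x - ⟪w x, y - x⟫) := by
    refine neg_le_of_abs_le ?_
    rw [abs_mul]
    exact mul_le_mul (hM hx) (hh x hx y hy) (abs_nonneg _) ((norm_nonneg _).trans (hM hx))
  beta_reduce
  rw [inner_add_left, real_inner_smul_left, real_inner_smul_left]
  linear_combination hcross + hmodel

theorem stmt0_general {n : ℕ} (xbar : EuclideanSpace ℝ (Fin n)) (ε : ℝ)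
    (B : Set (EuclideanSpace ℝ (Fin n))) (hB : B = Metric.closedBall xbar ε)
    (f g : EuclideanSpace ℝ (Fin n) → ℝ)
    (G v : EuclideanSpace ℝ (Fin n) → EuclideanSpace ℝ (Fin n))
    (Lf m₁ Lg LG ρ₁ : ℝ)
    (hf_lip : ∀ x ∈ B, ∀ y ∈ B, |f x - f y| ≤ Lf * ‖x - y‖)
    (U : Set (EuclideanSpace ℝ (Fin n))) (hBU : B ⊆ U)
    (hg_diff : ∀ x ∈ U, HasGradientAt g (G x) x)
    (hm₁ : 0 < m₁) (hg_lb : ∀ x ∈ B, m₁ ≤ g x)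
    (hg_lip : ∀ x ∈ B, ∀ y ∈ B, |g x - g y| ≤ Lg * ‖x - y‖)
    (hG_lip : ∀ x ∈ B, ∀ y ∈ B, ‖G x - G y‖ ≤ LG * ‖x - y‖)
    (hρ₁ : 0 ≤ ρ₁)
    (hsub : ∀ x ∈ B, ∀ y ∈ B,
      f y ≥ f x + (inner ℝ (v x) (y - x) : ℝ) - ρ₁ / 2 * ‖y - x‖ ^ 2) :
    ∃ ρ > (0 : ℝ), ∀ x ∈ B, ∀ y ∈ B,
      f y / g y ≥ f x / g x
        + (inner ℝ (((g x) ^ 2)⁻¹ • (g x • v x - f x • G x)) (y - x) : ℝ)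
        - ρ / 2 * ‖y - x‖ ^ 2 := by
  subst hB
  have hBb : IsBounded (closedBall xbar ε) := isBounded_closedBall
  have hf_lip' : LipschitzOnWith _ f (closedBall xbar ε) := .of_dist_le' fun x hx y hy => by
    simpa only [Real.dist_eq, dist_eq_norm, Real.norm_eq_abs] using hf_lip x hx y hy
  have hg_lip' : LipschitzOnWith _ g (closedBall xbar ε) := .of_dist_le' fun x hx y hy => by
    simpa only [Real.dist_eq, dist_eq_norm, Real.norm_eq_abs] using hg_lip x hx y hy
  have hG_lip' : LipschitzOnWith _ G (closedBall xbar ε) := .of_dist_le' fun x hx y hy => by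
    simpa only [dist_eq_norm] using hG_lip x hx y hy
  obtain ⟨MG, hMG⟩ := (hG_lip'.isBounded_image hBb).exists_norm_le
  obtain ⟨Mg, hMg, hgMg⟩ := (hg_lip'.isBounded_image hBb).exists_pos_norm_le
  rw [forall_mem_image] at hMG hgMg
  have hinv := (HasQuadraticModelOn.of_lipschitzOnWith (convex_closedBall xbar ε)
    (fun x hx => (hg_diff x (hBU hx)).hasFDerivAt.hasFDerivWithinAt) hG_lip').inv
    hm₁ hg_lb hg_lip' hMG
  obtain ⟨ρ, hρ⟩ := HasLowerQuadraticModelOn.mul hBb hsub hρ₁ hf_lip' hinv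
    (hg_lip'.inv_of_le hm₁ hg_lb) (inv_pos.2 hMg)
    fun x hx => inv_anti₀ (hm₁.trans_le (hg_lb x hx)) ((le_abs_self _).trans (hgMg hx))
  refine ⟨max ρ 1, by positivity, fun x hx y hy => ?_⟩
  have hgx : g x ≠ 0 := (hm₁.trans_le (hg_lb x hx)).ne'
  have hgrad : ((g x) ^ 2)⁻¹ • (g x • v x - f x • G x)
      = (g x)⁻¹ • v x + f x • -((g x ^ 2)⁻¹ • G x) := by
    match_scalars <;> field_simp
  rw [ge_iff_le, div_eq_mul_inv, div_eq_mul_inv, hgrad]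
  exact hρ.mono (le_max_left ρ 1) x hx y hy

theorem stmt0 {n : ℕ} (xbar : EuclideanSpace ℝ (Fin n)) (ε : ℝ) (hε : 0 < ε)
    (B : Set (EuclideanSpace ℝ (Fin n))) (hB : B = Metric.closedBall xbar ε)
    (f g : EuclideanSpace ℝ (Fin n) → ℝ)
    (G v : EuclideanSpace ℝ (Fin n) → EuclideanSpace ℝ (Fin n))
    (Lf M m₁ Lg LG ρ₁ : ℝ)
    (hf_lip : ∀ x ∈ B, ∀ y ∈ B, |f x - f y| ≤ Lf * ‖x - y‖)
    (hf_bd : ∀ x ∈ B, |f x| ≤ M)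
    (U : Set (EuclideanSpace ℝ (Fin n))) (hU : IsOpen U) (hBU : B ⊆ U)
    (hg_diff : ∀ x ∈ U, HasGradientAt g (G x) x)
    (hm₁ : 0 < m₁) (hg_lb : ∀ x ∈ B, m₁ ≤ g x)
    (hg_lip : ∀ x ∈ B, ∀ y ∈ B, |g x - g y| ≤ Lg * ‖x - y‖)
    (hG_lip : ∀ x ∈ B, ∀ y ∈ B, ‖G x - G y‖ ≤ LG * ‖x - y‖)
    (hρ₁ : 0 ≤ ρ₁)
    (hsub : ∀ x ∈ B, ∀ y ∈ B,
      f y ≥ f x + (inner ℝ (v x) (y - x) : ℝ) - ρ₁ / 2 * ‖y - x‖ ^ 2) :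
    ∃ ρ > (0 : ℝ), ∀ x ∈ B, ∀ y ∈ B,
      f y / g y ≥ f x / g x
        + (inner ℝ (((g x) ^ 2)⁻¹ • (g x • v x - f x • G x)) (y - x) : ℝ)
        - ρ / 2 * ‖y - x‖ ^ 2 :=
  stmt0_general xbar ε B hB f g G v Lf m₁ Lg LG ρ₁ hf_lip U hBU hg_diff hm₁ hg_lb hg_lip hG_lip hρ₁
    hsub
end

section
/- Let x̄ ∈ ℝ^n, ε > 0, and let B be the closed ball of radius ε centered at x̄. Let f : ℝ^n → ℝ be Lipschitz on B with constant L_f and satisfy |f(x)| ≤ M for all x ∈ B. Let g : ℝ^n → ℝ be differentiable on a neighborhood of B with g(x) ≥ m₁ > 0 for all x ∈ B, g Lipschitz on B with constant L_g, and the gradient ∇g Lipschitz on B with constant L_{∇g}. Set L_H = M·L_g/m₁² + L_f/m₁ and ρ₂ = 2·L_H·L_g/m₁ + M·L_{∇g}/m₁². Then for all x, y ∈ B: f(y)·(g(x) − g(y))/(g(y)·g(x)) + (f(x)/g(x)²)·⟨∇g(x), y − x⟩ ≥ −(ρ₂/2)‖x − y‖₂². -/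
/-!
Write `a = g x`, `b = g y`, `p = f x`, `q = f y`. The left-hand side equals
`(a - b) / a * (q / b - p / a) - p * (b - a - ⟪∇g x, y - x⟫) / a ^ 2`.
The first product is bounded by `(Lg ‖x - y‖ / m₁) · (L_H ‖x - y‖)`, since `f / g` is
`L_H`-Lipschitz on the ball; the second by `M (L_{∇g} / 2) ‖x - y‖² / m₁²`, by the
first-order Taylor estimate for a function with Lipschitz gradient.
-/

open Set

theorem abs_le_half_of_abs_hasDerivAt_le_mul {φ φ' : ℝ → ℝ} {C : ℝ} (h0 : φ 0 = 0)
    (hφ : ∀ t ∈ Icc (0 : ℝ) 1, HasDerivAt φ (φ' t) t)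
    (hφ' : ∀ t ∈ Icc (0 : ℝ) 1, |φ' t| ≤ C * t) :
    |φ 1| ≤ C / 2 := by
  have hbound : ∀ t, HasDerivAt (fun t : ℝ => C / 2 * t ^ 2) (C * t) t := fun t =>
    ((hasDerivAt_pow 2 t).const_mul (C / 2)).congr_deriv (by norm_num; ring)
  have key := image_norm_le_of_norm_deriv_right_le_deriv_boundary (f := φ) (f' := φ')
    (fun t ht => (hφ t ht).continuousAt.continuousWithinAt)
    (fun t ht => (hφ t (Ico_subset_Icc_self ht)).hasDerivWithinAt)
    (by simp [h0]) hbound (fun t ht => hφ' t (Ico_subset_Icc_self ht))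
    (right_mem_Icc.mpr zero_le_one)
  simpa using key

theorem abs_sub_sub_inner_le_of_gradient_lipschitz {E : Type*} [NormedAddCommGroup E]
    [InnerProductSpace ℝ E] [CompleteSpace E] {g : E → ℝ} {G : E → E} {x y : E} {LG : ℝ}
    (hg : ∀ z ∈ segment ℝ x y, HasGradientAt g (G z) z)
    (hG : ∀ z ∈ segment ℝ x y, ‖G z - G x‖ ≤ LG * ‖z - x‖) :
    |g y - g x - inner ℝ (G x) (y - x)| ≤ LG / 2 * ‖y - x‖ ^ 2 := by
  set v := y - x
  have hmem : ∀ t ∈ Icc (0 : ℝ) 1, x + t • v ∈ segment ℝ x y := fun t ht => by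
    rw [segment_eq_image']
    exact ⟨t, ht, rfl⟩
  have hderiv : ∀ t ∈ Icc (0 : ℝ) 1,
      HasDerivAt (fun t : ℝ => g (x + t • v) - g x - t * inner ℝ (G x) v)
        (inner ℝ (G (x + t • v) - G x) v) t := fun t ht => by
    have hline : HasDerivAt (fun t : ℝ => x + t • v) v t := by
      simpa using ((hasDerivAt_id t).smul_const v).const_add x
    have hcomp : HasDerivAt (fun t : ℝ => g (x + t • v)) (inner ℝ (G (x + t • v)) v) t := by
      exact (hg _ (hmem t ht)).hasFDerivAt.comp_hasDerivAt t hline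
    rw [inner_sub_left]
    exact (hcomp.sub_const (g x)).sub (hasDerivAt_mul_const _)
  have hbound : ∀ t ∈ Icc (0 : ℝ) 1,
      |inner ℝ (G (x + t • v) - G x) v| ≤ LG * ‖v‖ ^ 2 * t := fun t ht =>
    calc |inner ℝ (G (x + t • v) - G x) v| ≤ ‖G (x + t • v) - G x‖ * ‖v‖ :=
          abs_real_inner_le_norm _ _
      _ ≤ LG * ‖x + t • v - x‖ * ‖v‖ := by gcongr; exact hG _ (hmem t ht)
      _ = LG * ‖v‖ ^ 2 * t := by
          rw [add_sub_cancel_left, norm_smul, Real.norm_of_nonneg ht.1]; ring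
  have key := abs_le_half_of_abs_hasDerivAt_le_mul (by simp) hderiv hbound
  simp only [one_smul, one_mul, v, add_sub_cancel] at key
  linarith

theorem abs_div_sub_div_le {p q a b m M Lf Lg u : ℝ} (hm : 0 < m) (ha : m ≤ a) (hb : m ≤ b)
    (hq : |q| ≤ M) (hab : |a - b| ≤ Lg * u) (hqp : |q - p| ≤ Lf * u) :
    |q / b - p / a| ≤ (M * Lg / m ^ 2 + Lf / m) * u := by
  have ha0 : 0 < a := hm.trans_le ha
  have hb0 : 0 < b := hm.trans_le hb
  have hsplit : q / b - p / a = q * (a - b) / (b * a) + (q - p) / a := by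
    field_simp
    ring
  have hM : 0 ≤ M := (abs_nonneg _).trans hq
  have h1 : |q * (a - b) / (b * a)| ≤ M * (Lg * u) / (m * m) := by
    rw [abs_div, abs_mul, abs_of_pos (mul_pos hb0 ha0)]
    exact div_le_div₀ (mul_nonneg hM ((abs_nonneg _).trans hab))
      (mul_le_mul hq hab (abs_nonneg _) hM) (mul_pos hm hm) (mul_le_mul hb ha hm.le hb0.le)
  have h2 : |(q - p) / a| ≤ Lf * u / m := by
    rw [abs_div, abs_of_pos ha0]
    exact div_le_div₀ ((abs_nonneg _).trans hqp) hqp hm ha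
  calc |q / b - p / a| ≤ |q * (a - b) / (b * a)| + |(q - p) / a| := by
        rw [hsplit]; exact abs_add_le _ _
    _ ≤ M * (Lg * u) / (m * m) + Lf * u / m := add_le_add h1 h2
    _ = (M * Lg / m ^ 2 + Lf / m) * u := by ring

theorem neg_mul_sq_le_of_quotient_bounds {p q a b d m M Lg LG LH u : ℝ} (hm : 0 < m)
    (ha : m ≤ a) (hb : 0 < b) (hp : |p| ≤ M) (hab : |a - b| ≤ Lg * u)
    (hH : |q / b - p / a| ≤ LH * u) (hd : |b - a - d| ≤ LG / 2 * u ^ 2) :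
    -((2 * LH * Lg / m + M * LG / m ^ 2) / 2) * u ^ 2 ≤ q * (a - b) / (b * a) + p / a ^ 2 * d := by
  have ha0 : 0 < a := hm.trans_le ha
  have hsplit : q * (a - b) / (b * a) + p / a ^ 2 * d
      = (a - b) / a * (q / b - p / a) - p * (b - a - d) / a ^ 2 := by
    field_simp
    ring
  have h1 : |(a - b) / a * (q / b - p / a)| ≤ Lg * u / m * (LH * u) := by
    have hA : |(a - b) / a| ≤ Lg * u / m := by
      rw [abs_div, abs_of_pos ha0]
      exact div_le_div₀ ((abs_nonneg _).trans hab) hab hm ha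
    rw [abs_mul]
    exact mul_le_mul hA hH (abs_nonneg _) ((abs_nonneg _).trans hA)
  have h2 : |p * (b - a - d) / a ^ 2| ≤ M * (LG / 2 * u ^ 2) / m ^ 2 := by
    rw [abs_div, abs_mul, abs_of_pos (pow_pos ha0 2)]
    have hM : 0 ≤ M := (abs_nonneg _).trans hp
    exact div_le_div₀ (mul_nonneg hM ((abs_nonneg _).trans hd))
      (mul_le_mul hp hd (abs_nonneg _) hM) (pow_pos hm 2) (pow_le_pow_left₀ hm.le ha 2)
  have hρ : -((2 * LH * Lg / m + M * LG / m ^ 2) / 2) * u ^ 2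
      = -(Lg * u / m * (LH * u)) - M * (LG / 2 * u ^ 2) / m ^ 2 := by
    field_simp
    ring
  rw [hsplit, hρ]
  linarith [neg_abs_le ((a - b) / a * (q / b - p / a)), le_abs_self (p * (b - a - d) / a ^ 2)]

theorem stmt1_general {n : ℕ} (xbar : EuclideanSpace ℝ (Fin n)) (ε : ℝ)
    (B : Set (EuclideanSpace ℝ (Fin n))) (hB : B = Metric.closedBall xbar ε)
    (f g : EuclideanSpace ℝ (Fin n) → ℝ)
    (G : EuclideanSpace ℝ (Fin n) → EuclideanSpace ℝ (Fin n))
    (Lf M m₁ Lg LG LH ρ₂ : ℝ)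
    (hf_lip : ∀ x ∈ B, ∀ y ∈ B, |f x - f y| ≤ Lf * ‖x - y‖)
    (hf_bd : ∀ x ∈ B, |f x| ≤ M)
    (U : Set (EuclideanSpace ℝ (Fin n))) (hBU : B ⊆ U)
    (hg_diff : ∀ x ∈ U, HasGradientAt g (G x) x)
    (hm₁ : 0 < m₁) (hg_lb : ∀ x ∈ B, m₁ ≤ g x)
    (hg_lip : ∀ x ∈ B, ∀ y ∈ B, |g x - g y| ≤ Lg * ‖x - y‖)
    (hG_lip : ∀ x ∈ B, ∀ y ∈ B, ‖G x - G y‖ ≤ LG * ‖x - y‖)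
    (hLH : LH = M * Lg / m₁ ^ 2 + Lf / m₁)
    (hρ₂ : ρ₂ = 2 * LH * Lg / m₁ + M * LG / m₁ ^ 2) :
    ∀ x ∈ B, ∀ y ∈ B,
      f y * (g x - g y) / (g y * g x)
        + f x / (g x) ^ 2 * (inner ℝ (G x) (y - x) : ℝ)
        ≥ -(ρ₂ / 2) * ‖x - y‖ ^ 2 := by
  intro x hx y hy
  have hseg : segment ℝ x y ⊆ B := by
    rw [hB] at hx hy ⊢
    exact (convex_closedBall _ _).segment_subset hx hy
  have htaylor := abs_sub_sub_inner_le_of_gradient_lipschitz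
    (fun z hz => hg_diff z (hBU (hseg hz))) (fun z hz => hG_lip z (hseg hz) x hx)
  rw [norm_sub_rev y x] at htaylor
  have hquot : |f y / g y - f x / g x| ≤ LH * ‖x - y‖ := by
    rw [hLH]
    refine abs_div_sub_div_le hm₁ (hg_lb x hx) (hg_lb y hy) (hf_bd y hy) (hg_lip x hx y hy) ?_
    rw [abs_sub_comm]
    exact hf_lip x hx y hy
  rw [ge_iff_le, hρ₂]
  exact neg_mul_sq_le_of_quotient_bounds hm₁ (hg_lb x hx) (hm₁.trans_le (hg_lb y hy))
    (hf_bd x hx) (hg_lip x hx y hy) hquot htaylor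

theorem stmt1 {n : ℕ} (xbar : EuclideanSpace ℝ (Fin n)) (ε : ℝ) (hε : 0 < ε)
    (B : Set (EuclideanSpace ℝ (Fin n))) (hB : B = Metric.closedBall xbar ε)
    (f g : EuclideanSpace ℝ (Fin n) → ℝ)
    (G : EuclideanSpace ℝ (Fin n) → EuclideanSpace ℝ (Fin n))
    (Lf M m₁ Lg LG LH ρ₂ : ℝ)
    (hf_lip : ∀ x ∈ B, ∀ y ∈ B, |f x - f y| ≤ Lf * ‖x - y‖)
    (hf_bd : ∀ x ∈ B, |f x| ≤ M)
    (U : Set (EuclideanSpace ℝ (Fin n))) (hU : IsOpen U) (hBU : B ⊆ U)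
    (hg_diff : ∀ x ∈ U, HasGradientAt g (G x) x)
    (hm₁ : 0 < m₁) (hg_lb : ∀ x ∈ B, m₁ ≤ g x)
    (hg_lip : ∀ x ∈ B, ∀ y ∈ B, |g x - g y| ≤ Lg * ‖x - y‖)
    (hG_lip : ∀ x ∈ B, ∀ y ∈ B, ‖G x - G y‖ ≤ LG * ‖x - y‖)
    (hLH : LH = M * Lg / m₁ ^ 2 + Lf / m₁)
    (hρ₂ : ρ₂ = 2 * LH * Lg / m₁ + M * LG / m₁ ^ 2) :
    ∀ x ∈ B, ∀ y ∈ B,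
      f y * (g x - g y) / (g y * g x)
        + f x / (g x) ^ 2 * (inner ℝ (G x) (y - x) : ℝ)
        ≥ -(ρ₂ / 2) * ‖x - y‖ ^ 2 :=
  stmt1_general xbar ε B hB f g G Lf M m₁ Lg LG LH ρ₂ hf_lip hf_bd U hBU hg_diff hm₁ hg_lb hg_lip
    hG_lip hLH hρ₂
end

section
/- Define h : ℝ^n → ℝ by h(x) = ‖x‖₁/‖x‖₂ for x ≠ 0 and h(0) = 1. For every nonempty closed set X ⊆ ℝ^n, every q ∈ ℝ^n, and every ρ > 0, the function x ↦ h(x) + (ρ/2)‖x − q‖₂² attains its minimum over X; that is, there exists x* ∈ X with h(x*) + (ρ/2)‖x* − q‖₂² ≤ h(x) + (ρ/2)‖x − q‖₂² for all x ∈ X. -/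
noncomputable section
open Classical

/-- The ℓ¹ norm on ℝ^n. -/
def l1 {n : ℕ} (x : EuclideanSpace ℝ (Fin n)) : ℝ := ∑ i, |x i|

/-- The ratio ‖x‖₁/‖x‖₂ with the convention that it equals 1 at the origin. -/
def ratio {n : ℕ} (x : EuclideanSpace ℝ (Fin n)) : ℝ :=
  if x = 0 then 1 else l1 x / ‖x‖

lemma norm_le_l1 {n : ℕ} (x : EuclideanSpace ℝ (Fin n)) : ‖x‖ ≤ l1 x := by
  rw [EuclideanSpace.norm_eq]
  have h1 : ∑ i, ‖x i‖ ^ 2 ≤ (∑ i, ‖x i‖) ^ 2 :=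
    Finset.sum_sq_le_sq_sum_of_nonneg (fun i _ ↦ norm_nonneg _)
  calc Real.sqrt (∑ i, ‖x i‖ ^ 2) ≤ Real.sqrt ((∑ i, ‖x i‖) ^ 2) :=
        Real.sqrt_le_sqrt h1
    _ = ∑ i, ‖x i‖ := Real.sqrt_sq (Finset.sum_nonneg fun i _ ↦ norm_nonneg _)
    _ = l1 x := by simp [l1, Real.norm_eq_abs]

lemma one_le_ratio {n : ℕ} (x : EuclideanSpace ℝ (Fin n)) : 1 ≤ ratio x := by
  unfold ratio
  split_ifs with h
  · exact le_refl 1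
  · rw [le_div_iff₀ (norm_pos_iff.2 h), one_mul]
    exact norm_le_l1 x

lemma l1_continuous {n : ℕ} : Continuous (l1 (n := n)) := by
  unfold l1
  exact continuous_finset_sum _ fun i _ ↦
    (continuous_abs.comp (EuclideanSpace.proj i).continuous)

lemma ratio_lsc {n : ℕ} : LowerSemicontinuous (ratio (n := n)) := by
  intro x
  by_cases hx : x = 0
  · intro y hy
    subst hx
    rw [show ratio (0 : EuclideanSpace ℝ (Fin n)) = 1 from if_pos rfl] at hy
    exact Filter.Eventually.of_forall fun z ↦ lt_of_lt_of_le hy (one_le_ratio z)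
  · have hc : ContinuousAt (ratio (n := n)) x := by
      have heq : ∀ᶠ z in nhds x, ratio z = l1 z / ‖z‖ := by
        filter_upwards [isOpen_compl_singleton.mem_nhds hx] with z hz
        exact if_neg hz
      have : ContinuousAt (fun z : EuclideanSpace ℝ (Fin n) ↦ l1 z / ‖z‖) x :=
        (l1_continuous.continuousAt).div (continuous_norm.continuousAt)
          (norm_ne_zero_iff.2 hx)
      exact this.congr (heq.mono fun z h ↦ h.symm)
    exact hc.lowerSemicontinuousAt
  

theorem stmt4 {n : ℕ} (X : Set (EuclideanSpace ℝ (Fin n)))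
    (hXne : X.Nonempty) (hXcl : IsClosed X)
    (q : EuclideanSpace ℝ (Fin n)) (ρ : ℝ) (hρ : 0 < ρ) :
    ∃ xs ∈ X, ∀ x ∈ X,
      ratio xs + ρ / 2 * ‖xs - q‖ ^ 2 ≤ ratio x + ρ / 2 * ‖x - q‖ ^ 2 := by
  set f : EuclideanSpace ℝ (Fin n) → ℝ :=
    fun x ↦ ratio x + ρ / 2 * ‖x - q‖ ^ 2 with hf
  have hflsc : LowerSemicontinuous f := by
    apply LowerSemicontinuous.add ratio_lsc
    exact (Continuous.lowerSemicontinuous (by continuity))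
  obtain ⟨x0, hx0⟩ := hXne
  -- choose radius
  have h1le : (1 : ℝ) ≤ f x0 := by
    simp only [hf]
    nlinarith [one_le_ratio x0,
      mul_nonneg (by positivity : (0:ℝ) ≤ ρ / 2) (sq_nonneg ‖x0 - q‖)]
  set R : ℝ := max ‖x0 - q‖ (Real.sqrt (2 * (f x0 - 1) / ρ)) with hR
  set K : Set (EuclideanSpace ℝ (Fin n)) := X ∩ Metric.closedBall q R with hK
  have hx0K : x0 ∈ K := ⟨hx0, by
    rw [Metric.mem_closedBall, dist_eq_norm]; exact le_max_left _ _⟩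
  have hKc : IsCompact K :=
    (isCompact_closedBall q R).inter_left hXcl
  have hKcl : IsClosed K := hXcl.inter Metric.isClosed_closedBall
  -- outside K within X, f x > f x0
  have hout : ∀ x ∈ X, x ∉ K → f x0 ≤ f x := by
    intro x hx hxk
    have hxb : ¬ ‖x - q‖ ≤ R := by
      intro h
      exact hxk ⟨hx, by rwa [Metric.mem_closedBall, dist_eq_norm]⟩
    push_neg at hxb
    have hRs : Real.sqrt (2 * (f x0 - 1) / ρ) ≤ R := le_max_right _ _
    have h2 : Real.sqrt (2 * (f x0 - 1) / ρ) < ‖x - q‖ := lt_of_le_of_lt hRs hxb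
    have hnn : 0 ≤ 2 * (f x0 - 1) / ρ := div_nonneg (by linarith) hρ.le
    have h3 : 2 * (f x0 - 1) / ρ < ‖x - q‖ ^ 2 := Real.lt_sq_of_sqrt_lt h2
    have h3' : 2 * (f x0 - 1) < ‖x - q‖ ^ 2 * ρ := (div_lt_iff₀ hρ).mp h3
    have hfx0' : f x0 = ratio x0 + ρ / 2 * ‖x0 - q‖ ^ 2 := by simp [hf]
    rw [hfx0'] at h3'
    have h5 := one_le_ratio x
    simp only [hf]
    nlinarith
  -- minimize over K using directed compact intersection
  set C : K → Set (EuclideanSpace ℝ (Fin n)) :=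
    fun y ↦ K ∩ {x | f x ≤ f y} with hC
  have hCne : ∀ y, (C y).Nonempty := fun y ↦ ⟨y.1, y.2, Set.mem_setOf.mpr le_rfl⟩
  have hCcl : ∀ y, IsClosed (C y) := fun y ↦
    hKcl.inter (hflsc.isClosed_preimage (f y))
  have hCc : ∀ y, IsCompact (C y) := fun y ↦ hKc.inter_right (hflsc.isClosed_preimage (f y))
  have hdir : Directed (· ⊇ ·) C := by
    intro y z
    rcases le_total (f y) (f z) with h | h
    · exact ⟨y, subset_rfl, fun x hx ↦ ⟨hx.1, hx.2.trans h⟩⟩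
    · exact ⟨z, fun x hx ↦ ⟨hx.1, hx.2.trans h⟩, subset_rfl⟩
  have hne : (⋂ y, C y).Nonempty := by
    haveI : Nonempty K := ⟨⟨x0, hx0K⟩⟩
    exact IsCompact.nonempty_iInter_of_directed_nonempty_isCompact_isClosed C hdir hCne hCc hCcl
  obtain ⟨xs, hxs⟩ := hne
  simp only [Set.mem_iInter] at hxs
  have hxsK : xs ∈ K := (hxs ⟨x0, hx0K⟩).1
  refine ⟨xs, hxsK.1, fun x hx ↦ ?_⟩
  by_cases hxK : x ∈ K
  · exact (hxs ⟨x, hxK⟩).2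
  · exact le_trans ((hxs ⟨x0, hx0K⟩).2) (hout x hx hxK)
end
end

section
/- Define h : ℝ^n → ℝ by h(x) = ‖x‖₁/‖x‖₂ for x ≠ 0 and h(0) = 1. Let x₀ ∈ ℝ^n with x₀ ≠ 0 and let w ∈ ℝ^n satisfy wᵢ = 0 for every i with (x₀)ᵢ ≠ 0. Then lim_{τ→0⁺} (h(x₀ + τw) − h(x₀))/τ = ‖w‖₁/‖x₀‖₂ and lim_{τ→0⁺} (h(x₀ − τw) − h(x₀))/τ = ‖w‖₁/‖x₀‖₂. In particular, if w ≠ 0, the one-sided directional derivatives of h at x₀ in directions w and −w are both equal to the strictly positive number ‖w‖₁/‖x₀‖₂. -/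
/-!
Off the support of `x₀` the perturbation `τ • w` adds exactly `|τ| ‖w‖₁` to the ℓ¹ norm, and it
is orthogonal to `x₀`, so `τ ↦ ‖x₀ + τ • w‖` has derivative `⟪x₀, w⟫ / ‖x₀‖ = 0` at `τ = 0`.
Hence for `τ > 0` the ratio is `(‖x₀‖₁ + τ ‖w‖₁) / ‖x₀ + τ • w‖`, a function differentiable at `0`
with derivative `‖w‖₁ / ‖x₀‖`. The direction `-w` satisfies the same support condition.
-/

noncomputable section
open Classical

open Filter Topology
open scoped InnerProductSpace

theorem hasDerivAt_norm_add_smul {E : Type*} [NormedAddCommGroup E] [InnerProductSpace ℝ E]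
    {x : E} (w : E) (hx : x ≠ 0) :
    HasDerivAt (fun τ : ℝ => ‖x + τ • w‖) (⟪x, w⟫_ℝ / ‖x‖) 0 := by
  have h := (((hasDerivAt_id (0 : ℝ)).smul_const w).const_add x).norm_sq.sqrt (by simpa using hx)
  simp only [id, zero_smul, add_zero, one_smul, Real.sqrt_sq (norm_nonneg _)] at h
  convert h using 1
  field_simp

section SupportDisjoint

variable {n : ℕ} {x w : EuclideanSpace ℝ (Fin n)}

theorem EuclideanSpace.inner_eq_zero_of_support_disjoint (hw : ∀ i, x i ≠ 0 → w i = 0) :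
    ⟪x, w⟫_ℝ = 0 := by
  rw [EuclideanSpace.inner_eq_star_dotProduct]
  refine Finset.sum_eq_zero fun i _ => ?_
  by_cases hi : x i = 0 <;> simp [hi, hw i]

theorem l1_add_smul_of_support_disjoint (hw : ∀ i, x i ≠ 0 → w i = 0) (t : ℝ) :
    l1 (x + t • w) = l1 x + |t| * l1 w := by
  simp only [l1, Finset.mul_sum, ← Finset.sum_add_distrib]
  refine Finset.sum_congr rfl fun i _ => ?_
  by_cases hi : x i = 0 <;> simp [hi, hw i, abs_mul]

end SupportDisjoint

theorem l1_neg {n : ℕ} (w : EuclideanSpace ℝ (Fin n)) : l1 (-w) = l1 w := by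
  simp [l1]

theorem l1_pos {n : ℕ} {w : EuclideanSpace ℝ (Fin n)} (hw : w ≠ 0) : 0 < l1 w := by
  obtain ⟨i, hi⟩ : ∃ i, w i ≠ 0 := by
    by_contra! h
    exact hw (by ext j; exact h j)
  exact (abs_pos.2 hi).trans_le
    (Finset.single_le_sum (fun j _ => abs_nonneg (w j)) (Finset.mem_univ i))

theorem ratio_of_ne_zero {n : ℕ} {x : EuclideanSpace ℝ (Fin n)} (hx : x ≠ 0) :
    ratio x = l1 x / ‖x‖ :=
  if_neg hx

theorem tendsto_ratio_add_smul {n : ℕ} {x₀ w : EuclideanSpace ℝ (Fin n)} (hx₀ : x₀ ≠ 0)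
    (hw : ∀ i, x₀ i ≠ 0 → w i = 0) :
    Tendsto (fun τ : ℝ => (ratio (x₀ + τ • w) - ratio x₀) / τ) (𝓝[>] 0)
      (𝓝 (l1 w / ‖x₀‖)) := by
  have hne : ∀ τ : ℝ, x₀ + τ • w ≠ 0 := fun τ h => hx₀ <| by
    ext i
    by_contra hi
    exact hi (by simpa [hw i (by simpa using hi)] using congr($h i))
  have hF : HasDerivAt (fun τ : ℝ => (l1 x₀ + τ * l1 w) / ‖x₀ + τ • w‖) (l1 w / ‖x₀‖) 0 := by
    have h := ((hasDerivAt_mul_const (l1 w)).const_add (l1 x₀)).div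
      (hasDerivAt_norm_add_smul w hx₀) (by simpa using hx₀)
    rw [EuclideanSpace.inner_eq_zero_of_support_disjoint hw] at h
    refine h.congr_deriv ?_
    simp only [zero_smul, add_zero, zero_div, mul_zero, sub_zero]
    field_simp
  refine hF.tendsto_slope_zero_right.congr' ?_
  filter_upwards [self_mem_nhdsWithin] with τ (hτ : 0 < τ)
  simp only [ratio_of_ne_zero (hne τ), ratio_of_ne_zero hx₀, l1_add_smul_of_support_disjoint hw,
    abs_of_pos hτ, zero_add, zero_mul, zero_smul, add_zero, smul_eq_mul]
  ring

theorem stmt6 {n : ℕ} (x₀ w : EuclideanSpace ℝ (Fin n)) (hx₀ : x₀ ≠ 0)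
    (hw : ∀ i, x₀ i ≠ 0 → w i = 0) :
    Filter.Tendsto (fun τ : ℝ => (ratio (x₀ + τ • w) - ratio x₀) / τ)
      (nhdsWithin 0 (Set.Ioi 0)) (nhds (l1 w / ‖x₀‖)) ∧
    Filter.Tendsto (fun τ : ℝ => (ratio (x₀ - τ • w) - ratio x₀) / τ)
      (nhdsWithin 0 (Set.Ioi 0)) (nhds (l1 w / ‖x₀‖)) ∧
    (w ≠ 0 → 0 < l1 w / ‖x₀‖) := by
  refine ⟨tendsto_ratio_add_smul hx₀ hw, ?_,
    fun hw₀ => div_pos (l1_pos hw₀) (norm_pos_iff.2 hx₀)⟩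
  have hneg : ∀ i, x₀ i ≠ 0 → (-w) i = 0 := fun i hi => by simp [hw i hi]
  simpa [sub_eq_add_neg, l1_neg] using tendsto_ratio_add_smul hx₀ hneg
end
end

section
/- Let n ≥ 2 and let u ∈ ℝ^n with uᵢ ≠ 0 for every i. Let s ∈ ℝ^n with sᵢ = sign(uᵢ), a = ‖u‖₁, r = ‖u‖₂, and define the n×n matrix M = u sᵀ + s uᵀ − (3a/r²)·u uᵀ + a·I_n. Then 4n r² − 3a² ≥ a² ≥ 0, both numbers (a − √(4n r² − 3a²))/2 and (a + √(4n r² − 3a²))/2 are eigenvalues of M, and every vector v ∈ ℝ^n orthogonal to both u and s satisfies M v = a·v. -/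
/-!
With `a = s ⬝ᵥ u`, `r² = u ⬝ᵥ u` and `s ⬝ᵥ s = n`, the matrix `M` maps `u ↦ -a u + r² s` and
`s ↦ (n - 3a²/r²) u + 2a s`, so on `span {u, s}` it has trace `a` and determinant `a² - n r²`;
its eigenvalues are the roots `(a ± √(4 n r² - 3 a²)) / 2` of `μ² - a μ = n r² - a²`, and
Cauchy–Schwarz `a² ≤ n r²` makes the discriminant at least `a²`. On `{u, s}ᗮ`, `M` is `a • 1`.
The eigenvector `(μ - 2a) u + r² s` vanishes only when `μ = a`; then `n r² = a²`, so `u ∥ s` by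
the equality case of Cauchy–Schwarz, and since `n ≥ 2` some nonzero `v ⊥ s` is an eigenvector.
-/

noncomputable section

open Matrix

section CorrectionMatrix

variable {ι K : Type*} [Fintype ι] [Field K]

def correctionEigenvector (u s : ι → K) (μ : K) : ι → K :=
  (μ - 2 * (s ⬝ᵥ u)) • u + (u ⬝ᵥ u) • s

theorem dotProduct_correctionEigenvector (u s : ι → K) (μ : K) :
    u ⬝ᵥ correctionEigenvector u s μ = (u ⬝ᵥ u) * (μ - s ⬝ᵥ u) := by
  simp only [correctionEigenvector, dotProduct_add, dotProduct_smul, smul_eq_mul,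
    dotProduct_comm u s]
  ring

theorem correctionEigenvector_ne_zero {u s : ι → K} {μ : K} (hu : u ⬝ᵥ u ≠ 0)
    (hμ : μ ≠ s ⬝ᵥ u) : correctionEigenvector u s μ ≠ 0 := by
  intro h
  have := dotProduct_correctionEigenvector u s μ
  rw [h, dotProduct_zero] at this
  exact mul_ne_zero hu (sub_ne_zero.2 hμ) this.symm

variable [DecidableEq ι]

/-- The matrix `M`, written with `a = s ⬝ᵥ u` and `r² = u ⬝ᵥ u`. -/
def correctionMatrix (u s : ι → K) : Matrix ι ι K :=
  vecMulVec u s + vecMulVec s u - (3 * (s ⬝ᵥ u) / (u ⬝ᵥ u)) • vecMulVec u u + (s ⬝ᵥ u) • 1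

theorem correctionMatrix_mulVec (u s v : ι → K) :
    correctionMatrix u s *ᵥ v = (s ⬝ᵥ v) • u + (u ⬝ᵥ v) • s
      - (3 * (s ⬝ᵥ u) / (u ⬝ᵥ u) * (u ⬝ᵥ v)) • u + (s ⬝ᵥ u) • v := by
  simp only [correctionMatrix, add_mulVec, sub_mulVec, smul_mulVec, one_mulVec, vecMulVec_mulVec,
    op_smul_eq_smul, smul_smul]

theorem correctionMatrix_mulVec_of_dotProduct_eq_zero {u s v : ι → K}
    (hu : u ⬝ᵥ v = 0) (hs : s ⬝ᵥ v = 0) :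
    correctionMatrix u s *ᵥ v = (s ⬝ᵥ u) • v := by
  simp [correctionMatrix_mulVec, hu, hs]

theorem correctionMatrix_mulVec_correctionEigenvector {u s : ι → K} {μ : K} (hu : u ⬝ᵥ u ≠ 0)
    (hμ : μ ^ 2 - (s ⬝ᵥ u) * μ = (s ⬝ᵥ s) * (u ⬝ᵥ u) - (s ⬝ᵥ u) ^ 2) :
    correctionMatrix u s *ᵥ correctionEigenvector u s μ = μ • correctionEigenvector u s μ := by
  rw [correctionMatrix_mulVec, dotProduct_correctionEigenvector]
  have hsw : s ⬝ᵥ correctionEigenvector u s μ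
      = (μ - 2 * (s ⬝ᵥ u)) * (s ⬝ᵥ u) + (u ⬝ᵥ u) * (s ⬝ᵥ s) := by
    simp [correctionEigenvector, dotProduct_add, dotProduct_smul]
  have hcancel : 3 * (s ⬝ᵥ u) / (u ⬝ᵥ u) * ((u ⬝ᵥ u) * (μ - s ⬝ᵥ u))
      = 3 * (s ⬝ᵥ u) * (μ - s ⬝ᵥ u) := by
    field_simp
  rw [hsw, hcancel]
  ext i
  simp only [correctionEigenvector, Pi.add_apply, Pi.sub_apply, Pi.smul_apply, smul_eq_mul]
  linear_combination (-u i) * hμ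

end CorrectionMatrix

theorem sq_dotProduct_le {ι K : Type*} [Fintype ι] [CommRing K] [LinearOrder K]
    [IsStrictOrderedRing K] (v w : ι → K) : (v ⬝ᵥ w) ^ 2 ≤ (v ⬝ᵥ v) * (w ⬝ᵥ w) := by
  simpa only [dotProduct, sq] using Finset.sum_mul_sq_le_sq_mul_sq Finset.univ v w

/-- `‖(s ⬝ᵥ s) • u - (s ⬝ᵥ u) • s‖² = (s ⬝ᵥ s) ((s ⬝ᵥ s) (u ⬝ᵥ u) - (s ⬝ᵥ u)²)`. -/
theorem smul_eq_smul_of_sq_dotProduct_eq {ι K : Type*} [Fintype ι] [CommRing K] [LinearOrder K]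
    [IsStrictOrderedRing K] {u s : ι → K} (h : (s ⬝ᵥ u) ^ 2 = (s ⬝ᵥ s) * (u ⬝ᵥ u)) :
    (s ⬝ᵥ s) • u = (s ⬝ᵥ u) • s := by
  rw [← sub_eq_zero, ← dotProduct_self_eq_zero]
  simp only [dotProduct_sub, sub_dotProduct, dotProduct_smul, smul_dotProduct, smul_eq_mul,
    dotProduct_comm u s]
  linear_combination -(s ⬝ᵥ s) * h

theorem exists_correctionMatrix_eigenvector {ι K : Type*} [Fintype ι] [DecidableEq ι]
    [Nontrivial ι] [Field K] [LinearOrder K] [IsStrictOrderedRing K] {u s : ι → K} {μ : K}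
    (hu : u ⬝ᵥ u ≠ 0) (hs : s ⬝ᵥ s ≠ 0)
    (hμ : μ ^ 2 - (s ⬝ᵥ u) * μ = (s ⬝ᵥ s) * (u ⬝ᵥ u) - (s ⬝ᵥ u) ^ 2) :
    ∃ v, v ≠ 0 ∧ correctionMatrix u s *ᵥ v = μ • v := by
  by_cases hμa : μ = s ⬝ᵥ u
  · -- equality in Cauchy–Schwarz: `u ∥ s`, so any nonzero `v ⊥ s` is an eigenvector
    have hsu : (s ⬝ᵥ s) • u = (s ⬝ᵥ u) • s :=
      smul_eq_smul_of_sq_dotProduct_eq (by rw [hμa] at hμ; linear_combination hμ)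
    obtain ⟨v, hv, hvs⟩ := exists_ne_zero_dotProduct_eq_zero s
    have hvu : u ⬝ᵥ v = 0 := by
      have := congrArg (· ⬝ᵥ v) hsu
      simp only [smul_dotProduct, dotProduct_comm s v, hvs, smul_eq_mul, mul_zero] at this
      exact (mul_eq_zero.1 this).resolve_left hs
    refine ⟨v, hv, ?_⟩
    rw [correctionMatrix_mulVec_of_dotProduct_eq_zero hvu (by rwa [dotProduct_comm]), hμa]
  · exact ⟨_, correctionEigenvector_ne_zero hu hμa,
      correctionMatrix_mulVec_correctionEigenvector hu hμ⟩

theorem dotProduct_eq_sum_abs_of_sign {ι K : Type*} [Fintype ι] [Ring K] [LinearOrder K]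
    [IsOrderedRing K] {s x : ι → K} (hs : ∀ i, s i = if 0 < x i then 1 else -1) :
    s ⬝ᵥ x = ∑ i, |x i| := by
  refine Finset.sum_congr rfl fun i _ => ?_
  rw [hs i]
  split_ifs with hx
  · rw [one_mul, abs_of_pos hx]
  · rw [neg_one_mul, abs_of_nonpos (not_lt.1 hx)]

theorem dotProduct_self_eq_card_of_sign {ι K : Type*} [Fintype ι] [Ring K] [LinearOrder K]
    {s x : ι → K} (hs : ∀ i, s i = if 0 < x i then 1 else -1) :
    s ⬝ᵥ s = Fintype.card ι := by
  have hss : ∀ i, s i * s i = 1 := fun i => by rw [hs i]; split_ifs <;> simp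
  simp [dotProduct, hss]

theorem stmt9 {n : ℕ} (hn : 2 ≤ n)
    (u : EuclideanSpace ℝ (Fin n)) (hu : ∀ i, u i ≠ 0)
    (s : Fin n → ℝ) (hs : ∀ i, s i = if 0 < u i then 1 else -1)
    (a r : ℝ) (ha : a = l1 u) (hr : r = ‖u‖)
    (M : Matrix (Fin n) (Fin n) ℝ)
    (hM : M = Matrix.vecMulVec (fun i => u i) s + Matrix.vecMulVec s (fun i => u i)
      - (3 * a / r ^ 2) • Matrix.vecMulVec (fun i => u i) (fun i => u i)
      + a • (1 : Matrix (Fin n) (Fin n) ℝ)) :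
    (0 ≤ a ^ 2 ∧ a ^ 2 ≤ 4 * n * r ^ 2 - 3 * a ^ 2) ∧
    (∃ v : Fin n → ℝ, v ≠ 0 ∧
      M.mulVec v = ((a - Real.sqrt (4 * n * r ^ 2 - 3 * a ^ 2)) / 2) • v) ∧
    (∃ v : Fin n → ℝ, v ≠ 0 ∧
      M.mulVec v = ((a + Real.sqrt (4 * n * r ^ 2 - 3 * a ^ 2)) / 2) • v) ∧
    (∀ v : Fin n → ℝ, (∑ i, v i * u i) = 0 → (∑ i, v i * s i) = 0 →
      M.mulVec v = a • v) := by
  have hsu : s ⬝ᵥ u.ofLp = a := by rw [ha, dotProduct_eq_sum_abs_of_sign hs, l1]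
  have hss : s ⬝ᵥ s = n := by rw [dotProduct_self_eq_card_of_sign hs, Fintype.card_fin]
  have huu : u.ofLp ⬝ᵥ u.ofLp = r ^ 2 := by
    rw [hr, EuclideanSpace.norm_sq_eq]
    simp [dotProduct, sq]
  have hM' : M = correctionMatrix u.ofLp s := by rw [hM, correctionMatrix, hsu, huu]
  have hu₀ : u.ofLp ⬝ᵥ u.ofLp ≠ 0 :=
    dotProduct_self_eq_zero.not.2 fun h => hu ⟨0, by omega⟩ (congrFun h _)
  have hCS : a ^ 2 ≤ n * r ^ 2 := by simpa [hsu, hss, huu] using sq_dotProduct_le s u.ofLp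
  have hD : 0 ≤ 4 * n * r ^ 2 - 3 * a ^ 2 := by nlinarith
  have : Nontrivial (Fin n) := Fin.nontrivial_iff_two_le.2 hn
  have heig (t : ℝ) (ht : t ^ 2 = 4 * n * r ^ 2 - 3 * a ^ 2) :
      ∃ v : Fin n → ℝ, v ≠ 0 ∧ M *ᵥ v = ((a + t) / 2) • v := by
    rw [hM']
    refine exists_correctionMatrix_eigenvector hu₀ (by rw [hss]; positivity) ?_
    rw [hsu, hss, huu]
    linear_combination ht / 4
  refine ⟨⟨sq_nonneg a, by linarith⟩, ?_, heig _ (Real.sq_sqrt hD), fun v hvu hvs => ?_⟩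
  · simpa only [← sub_eq_add_neg] using
      heig (-√(4 * n * r ^ 2 - 3 * a ^ 2)) (by rw [neg_sq, Real.sq_sqrt hD])
  · rw [hM', correctionMatrix_mulVec_of_dotProduct_eq_zero (by rwa [dotProduct_comm])
      (by rwa [dotProduct_comm]), hsu]
end
end
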